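/- arXiv:1803.09991 — 2 statements merged into one kernel-verified Lean document; each statement's English description precedes it below -/
import Mathlib

section
/- For every integer d ≥ −1, the class SP(d) is a subsemigroup of FEnd(Σ*): if s ∈ SP(d) and t ∈ SP(d), then the composition st ∈ SP(d). -/
open Filter Topology

namespace AutHier

variable {A : Type*}

/-- The section (state) `f|_u` of a transformation `f : Σ* → Σ*` at the word `u`. -/
def sec (f : List A → List A) (u : List A) : List A → List A :=
  fun v => (f (u ++ v)).drop u.length

/-- `f` is an endomorphism of `Σ*`: it preserves lengths and prefixes. -/
def IsEnd (f : List A → List A) : Prop :=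
  (∀ u, (f u).length = u.length) ∧ ∀ u v, f u <+: f (u ++ v)

/-- `f` is a finite-state endomorphism of `Σ*` (an element of `FEnd(Σ*)`). -/
def IsFEnd (f : List A → List A) : Prop :=
  IsEnd f ∧ {g | ∃ u, g = sec f u}.Finite

/-- The activity `α_f(n)` of a transformation `f`:
the number of words `v` of length `n` which are images of some word `u`
of length `n` whose section `f|_u` is nontrivial. -/
noncomputable def activity (f : List A → List A) (n : ℕ) : ℕ :=
  Set.ncard {v : List A | v.length = n ∧
    ∃ u : List A, u.length = n ∧ sec f u ≠ id ∧ f u = v}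

/-- The class `SP(d)` of finite-state endomorphisms of
polynomial activity of degree at most `d`. -/
def SP (A : Type*) (d : ℤ) : Set (List A → List A) :=
  {t | IsFEnd t ∧
    Tendsto (fun n : ℕ => (activity t n : ℝ) / (n : ℝ) ^ (d + 1)) atTop (𝓝 0)}

/-- The class `SE(l)` of finite-state endomorphisms of
exponential activity of growth rate at most `l`. -/
def SE (A : Type*) (l : ℝ) : Set (List A → List A) :=
  {t | IsFEnd t ∧
    limsup (fun n : ℕ => Real.log (activity t n) / (n : ℝ)) atTop ≤ l}

/-- The stateset `Q'(t)` of the pruned automaton: all sections of `t` except `id`. -/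
def Qp (t : List A → List A) : Set (List A → List A) :=
  {g | ∃ u, g = sec t u} \ {id}

/-- One-letter transition of the determinized pruned output automaton of `t`. -/
def delta (t : List A → List A) (S : Set (List A → List A)) (y : A) :
    Set (List A → List A) :=
  {s' | s' ∈ Qp t ∧ ∃ s ∈ S, ∃ x : A, s [x] = [y] ∧ sec s [x] = s'}

/-- Extended transition function `δ*` of the determinized pruned output automaton. -/
def deltaStar (t : List A → List A) (S : Set (List A → List A)) (v : List A) :
    Set (List A → List A) :=
  v.foldl (delta t) S

/-- There is a chain of `k` cycles in the determinized pruned output automaton of `t`. -/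
def ChainOfCycles (t : List A → List A) (k : ℕ) : Prop :=
  ∃ (S : Fin k → Set (List A → List A)) (c : Fin k → List A),
    (∀ i, S i ≠ ∅) ∧ (∀ i, c i ≠ []) ∧
    (∀ h : 0 < k, ∃ v, deltaStar t {t} v = S ⟨0, h⟩) ∧
    (∀ i, deltaStar t (S i) (c i) = S i) ∧
    (∀ (i : Fin k) (h : (i : ℕ) + 1 < k),
      (∃ v, deltaStar t (S i) v = S ⟨(i : ℕ) + 1, h⟩) ∧
      ¬ (∃ v, deltaStar t (S ⟨(i : ℕ) + 1, h⟩) v = S i))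

/-- The edge relation of the orbit signalizer graph `Φ`: from the vertex `v = (s,t)`,
reading the letter `x`, with label `(x; m, ℓ)` where `m, ℓ` are the minimal integers
(`ℓ ≥ 1`) with `(s t^{m+ℓ})·x = (s t^m)·x`, the edge goes to
`v' = (r|_x, (t^ℓ)|_{r·x})` where `r = s t^m`. -/
def OSStep (v : (List A → List A) × (List A → List A)) (x : A) (m ℓ : ℕ)
    (v' : (List A → List A) × (List A → List A)) : Prop :=
  1 ≤ ℓ ∧ v.2^[m + ℓ] (v.1 [x]) = v.2^[m] (v.1 [x]) ∧
  (∀ m' ℓ' : ℕ, 1 ≤ ℓ' → v.2^[m' + ℓ'] (v.1 [x]) = v.2^[m'] (v.1 [x]) → m ≤ m') ∧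
  (∀ ℓ' : ℕ, 1 ≤ ℓ' → v.2^[m + ℓ'] (v.1 [x]) = v.2^[m] (v.1 [x]) → ℓ ≤ ℓ') ∧
  v' = (sec (v.2^[m] ∘ v.1) [x], sec (v.2^[ℓ]) ((v.2^[m] ∘ v.1) [x]))

/-- A walk of length `n` in the orbit signalizer graph `Φ`. -/
structure OSPath (A : Type*) (n : ℕ) where
  vert : Fin (n + 1) → (List A → List A) × (List A → List A)
  lett : Fin n → A
  idx : Fin n → ℕ
  per : Fin n → ℕ
  step : ∀ k : Fin n, OSStep (vert k.castSucc) (lett k) (idx k) (per k) (vert k.succ)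

/-- The inf-index-cost `i⁻(π)` of a walk with indices `idx` and periods `per`. -/
def iminusCost {n : ℕ} (idx per : Fin n → ℕ) : ℕ :=
  ∑ k : Fin n, if idx k = 0 then 0
    else (idx k - 1) * (∏ j ∈ Finset.univ.filter (· < k), per j) + 1

/-- The sup-index-cost `i⁺(π)` of a walk with indices `idx` and periods `per`. -/
def iplusCost {n : ℕ} (idx per : Fin n → ℕ) : ℕ :=
  ∑ k : Fin n, (∏ j ∈ Finset.univ.filter (· < k), per j) * idx k

/-- The period-cost `p(π)` of a walk with periods `per`. -/
def pCost {n : ℕ} (per : Fin n → ℕ) : ℕ :=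
  ∏ k : Fin n, per k

/-- The walk `w` starts at the vertex `(id, t)`, i.e. it is a walk in `Φ(t)` from its root. -/
def IsWalkFrom {n : ℕ} (t : List A → List A) (w : OSPath A n) : Prop :=
  w.vert 0 = (id, t)

/-- The vertex `v` is accessible from `(id, t)` in `Φ`, i.e. `v` is a vertex of `Φ(t)`. -/
def OSReach (t : List A → List A) (v : (List A → List A) × (List A → List A)) : Prop :=
  ∃ n : ℕ, ∃ w : OSPath A n, IsWalkFrom t w ∧ w.vert (Fin.last n) = v

/-- The set of inf-index-costs of walks in `Φ(t)` from `(id, t)`. -/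
def IminusCosts (t : List A → List A) : Set ℕ :=
  {c | ∃ n : ℕ, ∃ w : OSPath A n, IsWalkFrom t w ∧ c = iminusCost w.idx w.per}

/-- The set of sup-index-costs of walks in `Φ(t)` from `(id, t)`. -/
def IplusCosts (t : List A → List A) : Set ℕ :=
  {c | ∃ n : ℕ, ∃ w : OSPath A n, IsWalkFrom t w ∧ c = iplusCost w.idx w.per}

/-- The set of period-costs of walks in `Φ(t)` from `(id, t)`. -/
def PCosts (t : List A → List A) : Set ℕ :=
  {c | ∃ n : ℕ, ∃ w : OSPath A n, IsWalkFrom t w ∧ c = pCost w.per}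

/-- `w` is a simple cycle of `Φ(t)`: a closed walk of positive length, lying in `Φ(t)`,
with no repeated vertices. -/
def IsSimpleCycle {n : ℕ} (t : List A → List A) (w : OSPath A n) : Prop :=
  1 ≤ n ∧ OSReach t (w.vert 0) ∧ w.vert (Fin.last n) = w.vert 0 ∧
  ∀ j k : Fin (n + 1), (j : ℕ) < n → (k : ℕ) < n → w.vert j = w.vert k → j = k

section SPproof

variable {A : Type*}

lemma IsEnd.append_sec {s : List A → List A} (hs : IsEnd s) (u v : List A) :
    s (u ++ v) = s u ++ sec s u v := by
  obtain ⟨w, hw⟩ := hs.2 u v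
  rw [sec, ← hw]
  congr 1
  rw [← hs.1 u, List.drop_left]

lemma sec_comp {s t : List A → List A} (hs : IsEnd s) (ht : IsEnd t) (u : List A) :
    sec (fun u => t (s u)) u = sec t (s u) ∘ sec s u := by
  funext v
  show (t (s (u ++ v))).drop u.length = sec t (s u) (sec s u v)
  rw [hs.append_sec u v, ht.append_sec (s u) (sec s u v)]
  have h : u.length = (t (s u)).length := by rw [ht.1, hs.1]
  rw [h, List.drop_left]

lemma IsEnd.comp {s t : List A → List A} (hs : IsEnd s) (ht : IsEnd t) :
    IsEnd (fun u => t (s u)) := by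
  refine ⟨fun u => by rw [ht.1, hs.1], fun u v => ?_⟩
  show t (s u) <+: t (s (u ++ v))
  rw [hs.append_sec u v]
  exact ht.2 (s u) (sec s u v)

lemma IsFEnd.comp {s t : List A → List A} (hs : IsFEnd s) (ht : IsFEnd t) :
    IsFEnd (fun u => t (s u)) := by
  refine ⟨hs.1.comp ht.1, ?_⟩
  have hfin : ({g | ∃ u, g = sec s u} ×ˢ {g | ∃ u, g = sec t u} :
      Set ((List A → List A) × (List A → List A))).Finite := hs.2.prod ht.2
  refine (hfin.image (fun p => p.2 ∘ p.1)).subset ?_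
  rintro g ⟨u, rfl⟩
  exact ⟨(sec s u, sec t (s u)), ⟨⟨u, rfl⟩, ⟨s u, rfl⟩⟩, (sec_comp hs.1 ht.1 u).symm⟩

lemma activity_comp_le [Fintype A] {s t : List A → List A}
    (hs : IsEnd s) (ht : IsEnd t) (n : ℕ) :
    activity (fun u => t (s u)) n ≤ activity s n + activity t n := by
  set As := {v : List A | v.length = n ∧ ∃ u, u.length = n ∧ sec s u ≠ id ∧ s u = v} with hAs
  set At := {v : List A | v.length = n ∧ ∃ u, u.length = n ∧ sec t u ≠ id ∧ t u = v} with hAt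
  have finAs : As.Finite := (List.finite_length_eq A n).subset (fun v hv => hv.1)
  have finAt : At.Finite := (List.finite_length_eq A n).subset (fun v hv => hv.1)
  have hsub : {v : List A | v.length = n ∧ ∃ u, u.length = n ∧
      sec (fun u => t (s u)) u ≠ id ∧ t (s u) = v} ⊆ (t '' As) ∪ At := by
    rintro v ⟨hv, u, hu, hsec, rfl⟩
    by_cases hg : sec t (s u) = id
    · have hh : sec s u ≠ id := by
        intro h
        apply hsec
        rw [sec_comp hs ht, hg, h]
        rfl
      exact Or.inl ⟨s u, ⟨by rw [hs.1]; exact hu, u, hu, hh, rfl⟩, rfl⟩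
    · exact Or.inr ⟨hv, s u, by rw [hs.1]; exact hu, hg, rfl⟩
  calc activity (fun u => t (s u)) n
      ≤ ((t '' As) ∪ At).ncard :=
        Set.ncard_le_ncard hsub ((finAs.image t).union finAt)
    _ ≤ (t '' As).ncard + At.ncard := Set.ncard_union_le _ _
    _ ≤ As.ncard + At.ncard := by
        exact Nat.add_le_add_right (Set.ncard_image_le finAs) _
    _ = activity s n + activity t n := rfl

end SPproof

/-- For every integer `d ≥ -1`, the class `SP(d)` is a subsemigroup of `FEnd(Σ*)`. -/
theorem SP_mul_mem {A : Type*} [Fintype A] (d : ℤ) (hd : -1 ≤ d)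
    (s t : List A → List A) (hs : s ∈ SP A d) (ht : t ∈ SP A d) :
    (fun u => t (s u)) ∈ SP A d := by
  obtain ⟨hsF, hsT⟩ := hs
  obtain ⟨htF, htT⟩ := ht
  refine ⟨hsF.comp htF, ?_⟩
  have hsum : Filter.Tendsto
      (fun n : ℕ => (activity s n : ℝ) / (n : ℝ) ^ (d + 1)
        + (activity t n : ℝ) / (n : ℝ) ^ (d + 1)) atTop (𝓝 0) := by
    simpa using hsT.add htT
  refine squeeze_zero (fun n => ?_) (fun n => ?_) hsum
  · positivity
  · rw [← add_div]
    gcongr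
    exact_mod_cast activity_comp_le hsF.1 htF.1 n


end AutHier
end

section
/- For every t ∈ FEnd(Σ*) with t ≠ id and every n ∈ ℕ, α_t(n) = #{v ∈ Σⁿ : δ*({t}, v) ≠ ∅}; that is, the activity of t equals the number of length-n paths starting from the state {t} in the determinized pruned output automaton of t. -/
open Filter Topology

namespace AutHier

variable {A : Type*}

/-! By induction on `v`, the state `δ*({t}, v)` is the set of nontrivial sections `t|_u` over
the preimages `u` of `v`: a subset-construction step extends `u` by one letter, and pruning `id`
loses nothing because every section of `id` is `id`. So this state is nonempty exactly when `v`
is counted by the activity. -/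

section Sections

variable {f : List A → List A}

@[simp]
lemma sec_nil (f : List A → List A) : sec f [] = f := by
  funext v; simp [sec]

lemma sec_append (f : List A → List A) (u w : List A) :
    sec f (u ++ w) = sec (sec f u) w := by
  funext v
  simp [sec, List.drop_drop, List.append_assoc]

@[simp]
lemma sec_id (u : List A) : sec (id : List A → List A) u = id := by
  funext v; simp [sec]

lemma IsEnd.apply_nil (hf : IsEnd f) : f [] = [] :=
  List.length_eq_zero_iff.mp (hf.1 [])

lemma IsEnd.apply_append (hf : IsEnd f) (u w : List A) :
    f (u ++ w) = f u ++ sec f u w := by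
  obtain ⟨r, hr⟩ := hf.2 u w
  have hsec : sec f u w = r := by simp [sec, ← hr, ← hf.1 u]
  rw [hsec, hr]

lemma IsEnd.length_sec_apply (hf : IsEnd f) (u w : List A) :
    (sec f u w).length = w.length := by
  have h := congrArg List.length (hf.apply_append u w)
  simp only [hf.1, List.length_append] at h
  omega

end Sections

section Automaton

variable {t : List A → List A}

lemma deltaStar_append_singleton (t : List A → List A) (S : Set (List A → List A))
    (v : List A) (y : A) :
    deltaStar t S (v ++ [y]) = delta t (deltaStar t S v) y := by
  simp [deltaStar, List.foldl_append]

lemma delta_sections_preimage (ht : IsEnd t) (v : List A) (y : A) :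
    delta t (sec t '' (t ⁻¹' {v}) \ {id}) y = sec t '' (t ⁻¹' {v ++ [y]}) \ {id} := by
  ext g
  simp only [delta, Qp, Set.mem_sdiff, Set.mem_image, Set.mem_preimage,
    Set.mem_singleton_iff, Set.mem_ofPred_eq]
  constructor
  · rintro ⟨⟨-, hg⟩, s, ⟨⟨u, htu, rfl⟩, -⟩, x, hx, rfl⟩
    refine ⟨⟨u ++ [x], ?_, sec_append t u [x]⟩, hg⟩
    rw [ht.apply_append, htu, hx]
  · rintro ⟨⟨u', htu', rfl⟩, hg⟩
    obtain ⟨u, x, rfl⟩ : ∃ u x, u' = u ++ [x] := by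
      refine ⟨u'.dropLast, u'.getLast fun h => ?_, (List.dropLast_append_getLast _).symm⟩
      simp [h, ht.apply_nil] at htu'
    rw [ht.apply_append] at htu'
    obtain ⟨htu, hx⟩ := List.append_inj' htu' (ht.length_sec_apply u [x])
    rw [sec_append] at hg ⊢
    refine ⟨⟨⟨u ++ [x], by rw [sec_append]⟩, hg⟩, sec t u,
      ⟨⟨u, htu, rfl⟩, fun h => hg (by rw [h, sec_id])⟩, x, hx, rfl⟩

lemma deltaStar_singleton_self (ht : IsEnd t) (htid : t ≠ id) (v : List A) :
    deltaStar t {t} v = sec t '' (t ⁻¹' {v}) \ {id} := by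
  induction v using List.reverseRecOn with
  | nil =>
    ext g
    simp only [deltaStar, List.foldl_nil, Set.mem_singleton_iff, Set.mem_sdiff,
      Set.mem_image, Set.mem_preimage]
    constructor
    · rintro rfl
      exact ⟨⟨[], ht.apply_nil, sec_nil _⟩, htid⟩
    · rintro ⟨⟨u, htu, rfl⟩, -⟩
      rw [List.eq_nil_of_length_eq_zero ((ht.1 u).symm.trans (congrArg List.length htu)),
        sec_nil]
  | append_singleton v y ih =>
    rw [deltaStar_append_singleton, ih, delta_sections_preimage ht]

end Automaton

theorem activity_eq_card_paths_general {A : Type*} (t : List A → List A)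
    (ht : IsFEnd t) (htid : t ≠ id) (n : ℕ) :
    activity t n =
      Set.ncard {v : List A | v.length = n ∧ deltaStar t {t} v ≠ ∅} := by
  unfold activity
  congr 1
  ext v
  simp only [Set.mem_ofPred_eq, and_congr_right_iff]
  rintro rfl
  rw [deltaStar_singleton_self ht.1 htid, ← Set.nonempty_iff_ne_empty]
  constructor
  · rintro ⟨u, -, hsec, htu⟩
    exact ⟨sec t u, ⟨u, htu, rfl⟩, hsec⟩
  · rintro ⟨-, ⟨u, htu, rfl⟩, hsec⟩
    exact ⟨u, by rw [← ht.1.1 u, htu], hsec, htu⟩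

/-- The activity of `t ≠ id` equals the number of length-`n` paths from the state `{t}`
in the determinized pruned output automaton of `t`:
`α_t(n) = #{v ∈ Σⁿ : δ*({t}, v) ≠ ∅}`. -/
theorem activity_eq_card_paths {A : Type*} [Fintype A] (t : List A → List A)
    (ht : IsFEnd t) (htid : t ≠ id) (n : ℕ) :
    activity t n =
      Set.ncard {v : List A | v.length = n ∧ deltaStar t {t} v ≠ ∅} :=
  activity_eq_card_paths_general t ht htid n

end AutHier
end
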